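/- Let f : [0,1] → ℝ be continuous and piecewise strictly monotone with finitely many interior local extrema, all with distinct values. If f has an interior local maximum at some point, and every interior local maximum value of f is strictly less than every interior local minimum value of f, then f has no interior local minimum and exactly one interior local maximum. -/
import Mathlib

/-- A function `f` is piecewise strictly monotone on `[0,1]`: there is a finite partition
`0 = p 0 < p 1 < ⋯ < p (n+1) = 1` such that `f` is strictly monotone (increasing or
decreasing) on each subinterval. -/
def PiecewiseStrictMono (f : ℝ → ℝ) : Prop :=
  ∃ (n : ℕ) (p : Fin (n + 2) → ℝ), StrictMono p ∧ p 0 = 0 ∧ p (Fin.last (n + 1)) = 1 ∧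
    ∀ k : Fin (n + 1), StrictMonoOn f (Set.Icc (p k.castSucc) (p k.succ)) ∨
      StrictAntiOn f (Set.Icc (p k.castSucc) (p k.succ))

/-- If `f` is constant on a nondegenerate open subinterval of `(0,1)`, then it has
infinitely many interior local extrema. -/
lemma const_on_interval_contra (f : ℝ → ℝ)
    (hfin : {t | t ∈ Set.Ioo (0:ℝ) 1 ∧ IsLocalExtr f t}.Finite)
    {u v : ℝ} (huv : u < v) (hsub : Set.Ioo u v ⊆ Set.Ioo 0 1)
    {C : ℝ} (hc : ∀ x ∈ Set.Ioo u v, f x = C) : False := by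
  have h1 : Set.Ioo u v ⊆ {t | t ∈ Set.Ioo (0:ℝ) 1 ∧ IsLocalExtr f t} := by
    intro x hx
    refine ⟨hsub hx, Or.inl ?_⟩
    filter_upwards [Ioo_mem_nhds hx.1 hx.2] with y hy
    rw [hc y hy, hc x hx]
  exact (Set.Ioo_infinite huv) (hfin.subset h1)

/-- One-arc version: let `f : [0,1] → ℝ` be continuous and piecewise strictly monotone with
finitely many interior local extrema, all with distinct values.  If `f` has an interior local
maximum, and every interior local maximum value of `f` is strictly less than every interior
local minimum value of `f`, then `f` has no interior local minimum and exactly one interior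
local maximum. -/
theorem no_interior_min_and_unique_interior_max
    (f : ℝ → ℝ) (hcont : ContinuousOn f (Set.Icc 0 1)) (hpm : PiecewiseStrictMono f)
    (hfin : {t | t ∈ Set.Ioo (0:ℝ) 1 ∧ IsLocalExtr f t}.Finite)
    (hdist : ∀ s t, s ∈ Set.Ioo (0:ℝ) 1 → t ∈ Set.Ioo (0:ℝ) 1 →
      IsLocalExtr f s → IsLocalExtr f t → s ≠ t → f s ≠ f t)
    (hmax : ∃ a ∈ Set.Ioo (0:ℝ) 1, IsLocalMax f a)
    (hlt : ∀ a b, a ∈ Set.Ioo (0:ℝ) 1 → b ∈ Set.Ioo (0:ℝ) 1 →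
      IsLocalMax f a → IsLocalMin f b → f a < f b) :
    (∀ b ∈ Set.Ioo (0:ℝ) 1, ¬ IsLocalMin f b) ∧
    (∃! a, a ∈ Set.Ioo (0:ℝ) 1 ∧ IsLocalMax f a) := by
  obtain ⟨a, ha, hamax⟩ := hmax
  have nomin : ∀ b ∈ Set.Ioo (0:ℝ) 1, ¬ IsLocalMin f b := by
    intro b hb hbmin
    have hab : f a < f b := hlt a b ha hb hamax hbmin
    rcases lt_trichotomy a b with h | h | h
    · -- a < b : take max of f on [a,b]
      have hsub : Set.Icc a b ⊆ Set.Icc 0 1 :=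
        Set.Icc_subset_Icc ha.1.le hb.2.le
      obtain ⟨c, hc, hcmax⟩ := isCompact_Icc.exists_isMaxOn
        (Set.nonempty_Icc.mpr h.le) (hcont.mono hsub)
      have hfc : f b ≤ f c := hcmax (Set.right_mem_Icc.mpr h.le)
      have hca : a < c := by
        rcases lt_or_eq_of_le hc.1 with h' | h'
        · exact h'
        · exact absurd (h' ▸ hab.trans_le hfc) (lt_irrefl _)
      rcases lt_or_eq_of_le hc.2 with h' | h'
      · -- c interior max
        have hcloc : IsLocalMax f c := hcmax.isLocalMax (Icc_mem_nhds hca h')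
        have hcIoo : c ∈ Set.Ioo (0:ℝ) 1 := ⟨ha.1.trans hca, h'.trans hb.2⟩
        exact absurd (hlt c b hcIoo hb hcloc hbmin) (not_lt.mpr hfc)
      · -- c = b : f constant on a left neighborhood of b
        subst h'
        obtain ⟨ε, hε, hball⟩ := Metric.eventually_nhds_iff.mp hbmin
        have huv : max a (c - ε) < c := max_lt h (by linarith)
        refine const_on_interval_contra f hfin huv ?_ (C := f c) ?_
        · intro x hx
          exact ⟨ha.1.trans ((le_max_left _ _).trans_lt hx.1), hx.2.trans hb.2⟩
        · intro x hx
          have h1 : f x ≤ f c := hcmax ⟨((le_max_left _ _).trans_lt hx.1).le, hx.2.le⟩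
          have h2 : f c ≤ f x := hball (by
            rw [Real.dist_eq, abs_lt]
            constructor <;>
            · have := (le_max_right a (c - ε)).trans_lt hx.1
              have := hx.2; linarith)
          linarith
    · exact absurd (h ▸ hab) (lt_irrefl _)
    · -- b < a : take min of f on [b,a]
      have hsub : Set.Icc b a ⊆ Set.Icc 0 1 :=
        Set.Icc_subset_Icc hb.1.le ha.2.le
      obtain ⟨c, hc, hcmin⟩ := isCompact_Icc.exists_isMinOn
        (Set.nonempty_Icc.mpr h.le) (hcont.mono hsub)
      have hfc : f c ≤ f a := hcmin (Set.right_mem_Icc.mpr h.le)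
      have hcb : b < c := by
        rcases lt_or_eq_of_le hc.1 with h' | h'
        · exact h'
        · exact absurd (h' ▸ (hfc.trans_lt hab)) (lt_irrefl _)
      rcases lt_or_eq_of_le hc.2 with h' | h'
      · have hcloc : IsLocalMin f c := hcmin.isLocalMin (Icc_mem_nhds hcb h')
        have hcIoo : c ∈ Set.Ioo (0:ℝ) 1 := ⟨hb.1.trans hcb, h'.trans ha.2⟩
        exact absurd (hlt a c ha hcIoo hamax hcloc) (not_lt.mpr hfc)
      · subst h'
        obtain ⟨ε, hε, hball⟩ := Metric.eventually_nhds_iff.mp hamax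
        have huv : max b (c - ε) < c := max_lt h (by linarith)
        refine const_on_interval_contra f hfin huv ?_ (C := f c) ?_
        · intro x hx
          exact ⟨hb.1.trans ((le_max_left _ _).trans_lt hx.1), hx.2.trans ha.2⟩
        · intro x hx
          have h1 : f c ≤ f x := hcmin ⟨((le_max_left _ _).trans_lt hx.1).le, hx.2.le⟩
          have h2 : f x ≤ f c := hball (by
            rw [Real.dist_eq, abs_lt]
            constructor <;>
            · have := (le_max_right b (c - ε)).trans_lt hx.1
              have := hx.2; linarith)
          linarith
  refine ⟨nomin, ⟨a, ⟨ha, hamax⟩, ?_⟩⟩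
  -- uniqueness
  have key : ∀ a₁ a₂, a₁ ∈ Set.Ioo (0:ℝ) 1 → a₂ ∈ Set.Ioo (0:ℝ) 1 →
      IsLocalMax f a₁ → IsLocalMax f a₂ → a₁ < a₂ → False := by
    intro a₁ a₂ h1 h2 hm1 hm2 hlt12
    have hsub : Set.Icc a₁ a₂ ⊆ Set.Icc 0 1 :=
      Set.Icc_subset_Icc h1.1.le h2.2.le
    obtain ⟨c, hc, hcmin⟩ := isCompact_Icc.exists_isMinOn
      (Set.nonempty_Icc.mpr hlt12.le) (hcont.mono hsub)
    rcases lt_or_eq_of_le hc.1 with hl | hl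
    · rcases lt_or_eq_of_le hc.2 with hr | hr
      · have hcloc : IsLocalMin f c := hcmin.isLocalMin (Icc_mem_nhds hl hr)
        exact nomin c ⟨h1.1.trans hl, hr.trans h2.2⟩ hcloc
      · -- c = a₂ : constant on a left neighborhood of a₂
        subst hr
        obtain ⟨ε, hε, hball⟩ := Metric.eventually_nhds_iff.mp hm2
        have huv : max a₁ (c - ε) < c := max_lt hlt12 (by linarith)
        refine const_on_interval_contra f hfin huv ?_ (C := f c) ?_
        · intro x hx
          exact ⟨h1.1.trans ((le_max_left _ _).trans_lt hx.1), hx.2.trans h2.2⟩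
        · intro x hx
          have ha1 : f c ≤ f x := hcmin ⟨((le_max_left _ _).trans_lt hx.1).le, hx.2.le⟩
          have ha2 : f x ≤ f c := hball (by
            rw [Real.dist_eq, abs_lt]
            constructor <;>
            · have := (le_max_right a₁ (c - ε)).trans_lt hx.1
              have := hx.2; linarith)
          linarith
    · -- c = a₁ : constant on a right neighborhood of a₁
      subst hl
      obtain ⟨ε, hε, hball⟩ := Metric.eventually_nhds_iff.mp hm1
      have huv : a₁ < min a₂ (a₁ + ε) := lt_min hlt12 (by linarith)
      refine const_on_interval_contra f hfin huv ?_ (C := f a₁) ?_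
      · intro x hx
        exact ⟨h1.1.trans hx.1, (hx.2.trans_le (min_le_left _ _)).trans h2.2⟩
      · intro x hx
        have hb1 : f a₁ ≤ f x := hcmin ⟨hx.1.le, (hx.2.trans_le (min_le_left _ _)).le⟩
        have hb2 : f x ≤ f a₁ := hball (by
          rw [Real.dist_eq, abs_lt]
          constructor <;>
          · have := hx.2.trans_le (min_le_right a₂ (a₁ + ε))
            have := hx.1; linarith)
        linarith
  rintro y ⟨hy, hymax⟩
  by_contra hne
  rcases lt_or_gt_of_ne hne with h | h
  · exact key y a hy ha hymax hamax h
  · exact key a y ha hy hamax hymax h
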